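/- arXiv:2002.04149 — 6 statements merged into one kernel-verified Lean document; each statement's English description precedes it below -/
import Mathlib

section
/- If A and B are n×n Hermitian positive semidefinite complex matrices with B ⪯ A (i.e., A − B is positive semidefinite), then 0 ≤ per(B) ≤ per(A). -/
open Matrix Finset ComplexOrder

/-- The permanent of a square matrix. -/
noncomputable def perm {ι : Type*} [Fintype ι] [DecidableEq ι]
    (A : Matrix ι ι ℂ) : ℂ :=
  ∑ σ : Equiv.Perm ι, ∏ i, A i (σ i)

/-!
Write `B = Xᴴ X` and `A - B = Yᴴ Y`, so that `A = Zᴴ Z` for the matrix `Z` obtained by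
stacking `X` on top of `Y`. Expanding the permanent of a Gram matrix gives
`n! · per (Zᴴ Z) = ∑_f |per Z_f|²`, the sum running over all maps `f` from the `n` column
indices to the rows of `Z`, with `Z_f` the square matrix whose `i`-th row is row `f i` of `Z`.
Hence `per B ≥ 0`, and `per B ≤ per A` because the sum for `B` is the part of the sum for `A`
over the maps `f` that only pick rows of `X`.
-/

open scoped Nat

section

variable {ι α β : Type*} [Fintype ι] [DecidableEq ι] [Fintype α] [Fintype β]

theorem perm_eq_sum_prod_permute_rows (G : Matrix ι ι ℂ) (σ : Equiv.Perm ι) :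
    perm G = ∑ τ : Equiv.Perm ι, ∏ i, G (σ i) (τ i) := by
  rw [← Equiv.sum_comp (Equiv.mulRight σ)]
  refine sum_congr rfl fun ρ _ => ?_
  exact (Equiv.prod_comp σ fun i => G i (ρ i)).symm

theorem sum_star_perm_mul_perm_submatrix (Z : Matrix α ι ℂ) :
    ∑ f : ι → α, star (perm (Z.submatrix f id)) * perm (Z.submatrix f id)
      = (Fintype.card ι)! * perm (Zᴴ * Z) := by
  calc ∑ f : ι → α, star (perm (Z.submatrix f id)) * perm (Z.submatrix f id)
      = ∑ σ : Equiv.Perm ι, ∑ τ : Equiv.Perm ι, ∑ f : ι → α,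
          ∏ i, star (Z (f i) (σ i)) * Z (f i) (τ i) := by
        simp only [perm, submatrix_apply, id, star_sum, star_prod, sum_mul_sum,
          ← prod_mul_distrib]
        rw [sum_comm]
        exact sum_congr rfl fun σ _ => sum_comm
    _ = ∑ σ : Equiv.Perm ι, ∑ τ : Equiv.Perm ι, ∏ i, (Zᴴ * Z) (σ i) (τ i) := by
        simp only [mul_apply, conjTranspose_apply, Fintype.prod_sum]
    _ = ∑ _σ : Equiv.Perm ι, perm (Zᴴ * Z) := by
        simp only [← perm_eq_sum_prod_permute_rows]
    _ = (Fintype.card ι)! * perm (Zᴴ * Z) := by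
        rw [sum_const, Finset.card_univ, Fintype.card_perm, nsmul_eq_mul]

theorem natCast_factorial_mul_le_iff {x y : ℂ} (n : ℕ) :
    (n ! : ℂ) * x ≤ n ! * y ↔ x ≤ y :=
  mul_le_mul_iff_right₀ (by exact_mod_cast n.factorial_pos)

theorem perm_conjTranspose_mul_self_nonneg (Z : Matrix α ι ℂ) : 0 ≤ perm (Zᴴ * Z) := by
  rw [← natCast_factorial_mul_le_iff (Fintype.card ι), mul_zero,
    ← sum_star_perm_mul_perm_submatrix]
  exact sum_nonneg fun f _ => star_mul_self_nonneg _

theorem perm_conjTranspose_mul_self_le_add (X : Matrix α ι ℂ) (Y : Matrix β ι ℂ) :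
    perm (Xᴴ * X) ≤ perm (Xᴴ * X + Yᴴ * Y) := by
  rw [← fromCols_mul_fromRows, ← conjTranspose_fromRows_eq_fromCols_conjTranspose,
    ← natCast_factorial_mul_le_iff (Fintype.card ι), ← sum_star_perm_mul_perm_submatrix,
    ← sum_star_perm_mul_perm_submatrix]
  let inl : (ι → α) ↪ (ι → α ⊕ β) := Function.Embedding.inl.arrowCongrRight
  calc ∑ g : ι → α, star (perm (X.submatrix g id)) * perm (X.submatrix g id)
      = ∑ f ∈ univ.map inl,
          star (perm ((fromRows X Y).submatrix f id)) * perm ((fromRows X Y).submatrix f id) := by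
        rw [sum_map]; rfl
    _ ≤ _ := sum_le_univ_sum_of_nonneg fun f => star_mul_self_nonneg _

theorem Matrix.PosSemidef.exists_eq_conjTranspose_mul_self {A : Matrix ι ι ℂ}
    (hA : A.PosSemidef) : ∃ X : Matrix ι ι ℂ, A = Xᴴ * X := by
  open scoped MatrixOrder in exact CStarAlgebra.nonneg_iff_eq_star_mul_self.mp hA.nonneg

theorem stmt1_general (n : ℕ) (A B : Matrix (Fin n) (Fin n) ℂ)
    (hB : B.PosSemidef) (hAB : (A - B).PosSemidef) :
    0 ≤ perm B ∧ perm B ≤ perm A := by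
  obtain ⟨X, rfl⟩ := hB.exists_eq_conjTranspose_mul_self
  obtain ⟨Y, hY⟩ := hAB.exists_eq_conjTranspose_mul_self
  rw [sub_eq_iff_eq_add'.mp hY]
  exact ⟨perm_conjTranspose_mul_self_nonneg X, perm_conjTranspose_mul_self_le_add X Y⟩

/-- Monotonicity of the permanent with respect to the Löwner order on HPSD matrices:
if `B ⪯ A` then `0 ≤ per B ≤ per A` (inequalities in the standard partial order on `ℂ`,
in particular both permanents are real). -/
theorem stmt1 (n : ℕ) (A B : Matrix (Fin n) (Fin n) ℂ)
    (hA : A.PosSemidef) (hB : B.PosSemidef) (hAB : (A - B).PosSemidef) :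
    0 ≤ perm B ∧ perm B ≤ perm A :=
  stmt1_general n A B hB hAB
end
end

section
/- If A is an n×n Hermitian positive semidefinite matrix and D is a diagonal matrix with A ⪯ D, then per(A) ≤ ∏_{i=1}^n D_{ii}. -/
open Matrix Finset ComplexOrder

lemma exists_real_mul_mul_eq_one_of_pos {z : ℂ} (hz : 0 < z) :
    ∃ r : ℝ, (r : ℂ) * z * r = 1 := by
  obtain ⟨x, hx, rfl⟩ := RCLike.pos_iff_exists_ofReal.mp hz
  refine ⟨(√x)⁻¹, ?_⟩
  have hsqrt : √x * √x = x := Real.mul_self_sqrt hx.le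
  have hsqrt_ne : √x ≠ 0 := (Real.sqrt_pos.mpr hx).ne'
  rw [RCLike.ofReal_eq_complex_ofReal]
  exact_mod_cast (by field_simp; linarith : (√x)⁻¹ * x * (√x)⁻¹ = 1)

section Permanent

variable {ι : Type*} [Fintype ι] [DecidableEq ι]

lemma perm_one : perm (1 : Matrix ι ι ℂ) = 1 := by
  rw [← permanent_one (n := ι) (R := ℂ), ← permanent_transpose]
  rfl

lemma perm_diagonal_mul_mul_diagonal (a b : ι → ℂ) (A : Matrix ι ι ℂ) :
    perm (diagonal a * A * diagonal b) = (∏ i, a i) * (∏ i, b i) * perm A := by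
  simp only [perm, mul_diagonal, diagonal_mul, mul_sum]
  refine sum_congr rfl fun σ _ => ?_
  rw [prod_mul_distrib, prod_mul_distrib, Equiv.prod_comp σ b]
  ring

lemma perm_eq_zero_of_col_eq_zero {A : Matrix ι ι ℂ} {j : ι} (h : A.col j = 0) : perm A = 0 :=
  sum_eq_zero fun σ _ => prod_eq_zero (mem_univ (σ.symm j)) <| by
    simpa using congrFun h (σ.symm j)

lemma perm_conjTranspose_mul_diagonal_mul (E : Matrix ι ι ℂ) (w : ι → ℂ) :
    perm (Eᴴ * diagonal w * E) = ∑ f : ι → ι, (∏ i, w (f i)) *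
      ∑ σ : Equiv.Perm ι, star (∏ i, E (f i) i) * ∏ i, E (f (σ i)) i := by
  have hentry : ∀ i j, (Eᴴ * diagonal w * E) i j = ∑ k, star (E k i) * w k * E k j := by
    intro i j
    rw [mul_apply]
    simp [mul_diagonal]
  calc perm (Eᴴ * diagonal w * E)
      = ∑ σ : Equiv.Perm ι, ∑ f : ι → ι, (∏ i, w (f i)) *
          (star (∏ i, E (f i) i) * ∏ i, E (f (σ.symm i)) i) := by
        refine sum_congr rfl fun σ _ => ?_
        simp_rw [hentry, Fintype.prod_sum]
        refine sum_congr rfl fun f _ => ?_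
        rw [prod_mul_distrib, prod_mul_distrib, star_prod,
          ← Equiv.prod_comp σ (fun i => E (f (σ.symm i)) i)]
        simp only [Equiv.symm_apply_apply]
        ring
    _ = ∑ σ : Equiv.Perm ι, ∑ f : ι → ι, (∏ i, w (f i)) *
          (star (∏ i, E (f i) i) * ∏ i, E (f (σ i)) i) :=
        Fintype.sum_equiv (Equiv.inv _) _ _ fun _ => rfl
    _ = _ := by
        rw [sum_comm]
        simp_rw [mul_sum]

lemma sum_mul_sum_star_mul_comp_perm_nonneg (b : (ι → ι) → ℂ) (w : (ι → ι) → ℝ)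
    (hw : ∀ f, 0 ≤ w f) (hw_comp : ∀ (f : ι → ι) (σ : Equiv.Perm ι), w (f ∘ σ) = w f) :
    0 ≤ ∑ f : ι → ι, (w f : ℂ) * ∑ σ : Equiv.Perm ι, star (b f) * b (f ∘ σ) := by
  set S := ∑ f : ι → ι, (w f : ℂ) * ∑ σ : Equiv.Perm ι, star (b f) * b (f ∘ σ)
  set T : (ι → ι) → ℂ := fun f => ∑ ρ : Equiv.Perm ι, b (f ∘ ρ)
  have hshift : ∀ τ : Equiv.Perm ι,
      S = ∑ f : ι → ι, (w f : ℂ) * (star (b (f ∘ τ)) * T f) := by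
    intro τ
    refine Fintype.sum_equiv (Equiv.arrowCongr τ (Equiv.refl ι)) _ _ fun f => ?_
    have he : Equiv.arrowCongr τ (Equiv.refl ι) f = f ∘ τ.symm := rfl
    have hT : T (f ∘ τ.symm) = ∑ σ : Equiv.Perm ι, b (f ∘ σ) :=
      Equiv.sum_comp (Equiv.mulLeft τ.symm) fun σ => b (f ∘ σ)
    rw [he, hw_comp, hT, mul_sum, Function.comp_assoc, τ.symm_comp_self, Function.comp_id]
    simp only [mul_sum]
  have havg : (Fintype.card (Equiv.Perm ι) : ℂ) * S =
      ∑ f : ι → ι, (w f : ℂ) * (star (T f) * T f) := by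
    rw [← nsmul_eq_mul, ← card_univ, ← sum_const]
    calc ∑ _τ : Equiv.Perm ι, S
        = ∑ τ : Equiv.Perm ι, ∑ f : ι → ι, (w f : ℂ) * (star (b (f ∘ τ)) * T f) :=
          sum_congr rfl fun τ _ => hshift τ
      _ = _ := by
          rw [sum_comm]
          simp_rw [← mul_sum, ← sum_mul, ← star_sum]
          rfl
  have hcard : (0 : ℂ) < Fintype.card (Equiv.Perm ι) := by exact_mod_cast Fintype.card_pos
  refine le_of_mul_le_mul_left ?_ hcard
  rw [mul_zero, havg]
  exact sum_nonneg fun f _ => mul_nonneg (by exact_mod_cast hw f) (star_mul_self_nonneg _)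

lemma perm_conjTranspose_mul_diagonal_mul_mono (E : Matrix ι ι ℂ) {w v : ι → ℝ} (hw : 0 ≤ w)
    (hwv : w ≤ v) :
    perm (Eᴴ * diagonal (fun i => (w i : ℂ)) * E) ≤
      perm (Eᴴ * diagonal (fun i => (v i : ℂ)) * E) := by
  rw [← sub_nonneg, perm_conjTranspose_mul_diagonal_mul, perm_conjTranspose_mul_diagonal_mul,
    ← sum_sub_distrib]
  have hweight_comp : ∀ (f : ι → ι) (σ : Equiv.Perm ι),
      ∏ i, v ((f ∘ σ) i) - ∏ i, w ((f ∘ σ) i) = ∏ i, v (f i) - ∏ i, w (f i) := fun f σ => by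
    simp only [Function.comp_apply, Equiv.prod_comp σ (fun i => v (f i)),
      Equiv.prod_comp σ (fun i => w (f i))]
  convert sum_mul_sum_star_mul_comp_perm_nonneg (fun f => ∏ i, E (f i) i)
    (fun f => ∏ i, v (f i) - ∏ i, w (f i))
    (fun f => sub_nonneg.mpr (prod_le_prod (fun i _ => hw (f i)) fun i _ => hwv (f i)))
    hweight_comp using 2 with f
  simp only [Function.comp_apply]
  push_cast
  ring

lemma Matrix.IsHermitian.eigenvalues_le_one {B : Matrix ι ι ℂ} (hB : B.IsHermitian)
    (h : (1 - B).PosSemidef) (k : ι) : hB.eigenvalues k ≤ 1 := by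
  have hnorm : RCLike.re (star ⇑(hB.eigenvectorBasis k) ⬝ᵥ ⇑(hB.eigenvectorBasis k)) = 1 := by
    rw [dotProduct_comm, ← EuclideanSpace.inner_eq_star_dotProduct, inner_self_eq_norm_sq_to_K,
      hB.eigenvectorBasis.orthonormal.1 k]
    simp
  have := h.re_dotProduct_nonneg (hB.eigenvectorBasis k)
  rw [sub_mulVec, one_mulVec, dotProduct_sub, map_sub, ← hB.eigenvalues_eq, hnorm] at this
  linarith

lemma perm_le_one_of_posSemidef {B : Matrix ι ι ℂ} (hB : B.PosSemidef)
    (hB1 : (1 - B).PosSemidef) : perm B ≤ 1 := by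
  set U : Matrix ι ι ℂ := ↑hB.isHermitian.eigenvectorUnitary
  have hspec : B = Uᴴᴴ * diagonal (fun i => (hB.isHermitian.eigenvalues i : ℂ)) * Uᴴ := by
    have h := hB.isHermitian.spectral_theorem
    rw [Unitary.conjStarAlgAut_apply] at h
    rwa [conjTranspose_conjTranspose, ← star_eq_conjTranspose]
  have hone : (1 : Matrix ι ι ℂ) = Uᴴᴴ * diagonal (fun _ => ((1 : ℝ) : ℂ)) * Uᴴ := by
    rw [conjTranspose_conjTranspose, ← star_eq_conjTranspose]
    simp only [Complex.ofReal_one, diagonal_one, mul_one]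
    exact (Unitary.mul_star_self_of_mem (SetLike.coe_mem _)).symm
  have hle := perm_conjTranspose_mul_diagonal_mul_mono Uᴴ hB.eigenvalues_nonneg
    (hB.isHermitian.eigenvalues_le_one hB1)
  rwa [← hspec, ← hone, perm_one] at hle

lemma Matrix.PosSemidef.col_eq_zero_of_apply_eq_zero {A : Matrix ι ι ℂ} (hA : A.PosSemidef)
    {j : ι} (h : A j j = 0) : A.col j = 0 := by
  rw [← mulVec_single_one, ← hA.dotProduct_mulVec_zero_iff]
  simpa [mulVec_single_one, dotProduct, Pi.single_apply] using h

lemma perm_le_prod_of_pos {A : Matrix ι ι ℂ} {d : ι → ℂ} (hA : A.PosSemidef)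
    (hAD : (diagonal d - A).PosSemidef) (hd : ∀ i, 0 < d i) : perm A ≤ ∏ i, d i := by
  choose g hg using fun i => exists_real_mul_mul_eq_one_of_pos (hd i)
  set G : Matrix ι ι ℂ := diagonal fun i => (g i : ℂ)
  have hG : Gᴴ = G := by simp [G, diagonal_conjTranspose, Complex.conj_ofReal]
  have hB : (G * A * G).PosSemidef := by
    simpa only [hG] using hA.mul_mul_conjTranspose_same G
  have hB1 : (1 - G * A * G).PosSemidef := by
    have hGDG : G * diagonal d * G = 1 := by
      simp only [G, diagonal_mul_diagonal, hg, diagonal_one]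
    simpa [hG, mul_sub, sub_mul, hGDG] using hAD.mul_mul_conjTranspose_same G
  have hprod : (∏ i, d i) * ((∏ i, (g i : ℂ)) * ∏ i, (g i : ℂ)) = 1 := by
    rw [← prod_mul_distrib, ← prod_mul_distrib]
    exact prod_eq_one fun i _ => by rw [← hg i]; ring
  calc perm A = (∏ i, d i) * perm (G * A * G) := by
        rw [perm_diagonal_mul_mul_diagonal, ← mul_assoc, hprod, one_mul]
    _ ≤ (∏ i, d i) * 1 :=
        mul_le_mul_of_nonneg_left (perm_le_one_of_posSemidef hB hB1)
          (prod_nonneg fun i _ => (hd i).le)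
    _ = ∏ i, d i := mul_one _

end Permanent

/-- If `A` is HPSD and `D` is a diagonal matrix with `A ⪯ D`,
then `per A ≤ ∏ᵢ Dᵢᵢ` (in the standard partial order on `ℂ`). -/
theorem stmt2 (n : ℕ) (A : Matrix (Fin n) (Fin n) ℂ) (d : Fin n → ℂ)
    (hA : A.PosSemidef) (hAD : (Matrix.diagonal d - A).PosSemidef) :
    perm A ≤ ∏ i, d i := by
  have hd : ∀ i, 0 ≤ d i := posSemidef_diagonal_iff.mp (by simpa using hAD.add hA)
  by_cases hpos : ∀ i, d i ≠ 0
  · exact perm_le_prod_of_pos hA hAD fun i => (hd i).lt_of_ne' (hpos i)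
  · push Not at hpos
    obtain ⟨i, hi⟩ := hpos
    have hAii : A i i = 0 :=
      le_antisymm (by simpa [hi] using hAD.diag_nonneg (i := i)) hA.diag_nonneg
    rw [perm_eq_zero_of_col_eq_zero (hA.col_eq_zero_of_apply_eq_zero hAii),
      prod_eq_zero (mem_univ i) hi]
end

section
/- Let V be an n×n complex matrix with columns v_1,…,v_n, let A = V†V, and let y ∈ ℂⁿ satisfy ‖y‖² = n. Then (n!/nⁿ) · ∏_{i=1}^n |⟨v_i, y⟩|² ≤ per(A). -/
/-!
The maps `f : ι → m` index "minors with repeated rows" `V_f = V.submatrix f id`, and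
`n! · per (Wᴴ V) = ∑_f conj (per W_f) · per V_f`. So `per (Vᴴ V)` is, up to `n!`, a squared norm,
and Cauchy–Schwarz gives `|per (Wᴴ V)|² ≤ per (Wᴴ W) · per (Vᴴ V)`. Taking for `W` the matrix
whose columns all equal `y`, `Wᴴ V` has constant rows `(conj ⟨vᵢ, y⟩)ᵢ` and `Wᴴ W` is the constant
`‖y‖²`, so their permanents are `n! ∏ᵢ conj ⟨vᵢ, y⟩` and `n! ‖y‖²ⁿ`.
-/

open Matrix Finset

theorem Matrix.norm_star_dotProduct_sq_le {𝕜 ι : Type*} [RCLike 𝕜] [Fintype ι] (a b : ι → 𝕜) :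
    ‖star a ⬝ᵥ b‖ ^ 2 ≤ RCLike.re (star a ⬝ᵥ a) * RCLike.re (star b ⬝ᵥ b) := by
  have h := inner_mul_inner_self_le (𝕜 := 𝕜) (WithLp.toLp 2 a : EuclideanSpace 𝕜 ι)
    (WithLp.toLp 2 b)
  simp only [EuclideanSpace.inner_toLp_toLp, dotProduct_comm _ (star _)] at h
  rwa [star_dotProduct b, norm_star, ← sq] at h

section Permanent

variable {ι m : Type*} [Fintype ι] [DecidableEq ι] [Fintype m]

theorem perm_permute (M : Matrix ι ι ℂ) (σ : Equiv.Perm ι) :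
    perm (M.submatrix σ id) = perm M := by
  unfold perm
  refine Fintype.sum_equiv (Equiv.mulRight σ⁻¹) _ _ fun τ => ?_
  simpa using Equiv.prod_comp σ (fun i => M i (τ (σ.symm i)))

theorem perm_replicateRow (d : ι → ℂ) :
    perm (replicateRow ι d) = (Fintype.card ι).factorial * ∏ i, d i := by
  simp only [perm, replicateRow_apply, Equiv.prod_comp, sum_const, card_univ,
    Fintype.card_perm, nsmul_eq_mul]

-- Cauchy–Binet for permanents.
theorem factorial_mul_perm_conjTranspose_mul (W V : Matrix m ι ℂ) :
    (Fintype.card ι).factorial * perm (Wᴴ * V) =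
      star (fun f : ι → m => perm (W.submatrix f id)) ⬝ᵥ
        (fun f : ι → m => perm (V.submatrix f id)) := by
  have row_sum : ∀ σ τ : Equiv.Perm ι,
      ∑ f : ι → m, ∏ i, star (W (f i) (σ i)) * V (f i) (τ i) = ∏ i, (Wᴴ * V) (σ i) (τ i) := by
    intro σ τ
    simp only [mul_apply, conjTranspose_apply]
    exact (Fintype.prod_sum fun i j => star (W j (σ i)) * V j (τ i)).symm
  calc (Fintype.card ι).factorial * perm (Wᴴ * V)
      = ∑ σ : Equiv.Perm ι, perm ((Wᴴ * V).submatrix σ id) := by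
        simp [perm_permute, Fintype.card_perm]
    _ = ∑ σ : Equiv.Perm ι, ∑ τ : Equiv.Perm ι, ∑ f : ι → m,
          ∏ i, star (W (f i) (σ i)) * V (f i) (τ i) := by
        simp only [row_sum, perm, submatrix_apply, id]
    _ = _ := by
        simp only [dotProduct, perm, submatrix_apply, id, Pi.star_apply, star_sum, star_prod,
          sum_mul, mul_sum, ← prod_mul_distrib]
        rw [sum_comm]
        exact (sum_congr rfl fun τ _ => sum_comm).trans sum_comm

theorem norm_perm_conjTranspose_mul_sq_le (W V : Matrix m ι ℂ) :
    ‖perm (Wᴴ * V)‖ ^ 2 ≤ (perm (Wᴴ * W)).re * (perm (Vᴴ * V)).re := by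
  have h := norm_star_dotProduct_sq_le (fun f : ι → m => perm (W.submatrix f id))
    (fun f : ι → m => perm (V.submatrix f id))
  simp only [← factorial_mul_perm_conjTranspose_mul, norm_mul, RCLike.re_to_complex,
    ← Complex.ofReal_natCast, Complex.norm_real, Real.norm_natCast, Complex.re_ofReal_mul] at h
  have hpos : (0 : ℝ) < (Fintype.card ι).factorial ^ 2 := by positivity
  refine le_of_mul_le_mul_left ?_ hpos
  linarith

theorem factorial_mul_prod_norm_conjTranspose_mulVec_sq_le (V : Matrix m ι ℂ) (y : m → ℂ) :
    (Fintype.card ι).factorial * ∏ i, ‖(Vᴴ *ᵥ y) i‖ ^ 2 ≤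
      (∑ j, ‖y j‖ ^ 2) ^ Fintype.card ι * (perm (Vᴴ * V)).re := by
  have hWV : (replicateCol ι y)ᴴ * V = replicateRow ι (star (Vᴴ *ᵥ y)) := by
    rw [conjTranspose_replicateCol, ← replicateRow_vecMul, star_mulVec,
      conjTranspose_conjTranspose]
  have hWW : (replicateCol ι y)ᴴ * replicateCol ι y =
      replicateRow ι (fun _ => ((∑ j, ‖y j‖ ^ 2 : ℝ) : ℂ)) := by
    rw [conjTranspose_replicateCol, ← replicateRow_vecMul, mulVec_replicateCol_eq_const]
    congr 1
    funext
    simp [dotProduct, Complex.conj_mul']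
  have h := norm_perm_conjTranspose_mul_sq_le (replicateCol ι y) V
  rw [hWV, hWW, perm_replicateRow, perm_replicateRow] at h
  simp only [norm_mul, norm_prod, Pi.star_apply, norm_star, prod_const, card_univ, mul_pow,
    ← prod_pow, ← Complex.ofReal_pow, ← Complex.ofReal_natCast, Complex.norm_real,
    Real.norm_natCast, Complex.re_ofReal_mul, Complex.ofReal_re] at h
  have hpos : (0 : ℝ) < (Fintype.card ι).factorial := by positivity
  refine le_of_mul_le_mul_left ?_ hpos
  linarith

end Permanent

/-- For `A = Vᴴ V` with columns `vᵢ` and `y` on the complex sphere of radius `√n`,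
`(n!/nⁿ) ∏ᵢ |⟨vᵢ, y⟩|² ≤ per A`. -/
theorem stmt3 (n : ℕ) (V : Matrix (Fin n) (Fin n) ℂ) (y : Fin n → ℂ)
    (hy : ∑ i, ‖y i‖ ^ 2 = (n : ℝ)) :
    (((n.factorial : ℝ) / (n : ℝ) ^ n) *
        ∏ i, ‖star (fun j => V j i) ⬝ᵥ y‖ ^ 2 : ℝ) ≤ (perm (Vᴴ * V)).re := by
  have h := factorial_mul_prod_norm_conjTranspose_mulVec_sq_le V y
  rw [hy, Fintype.card_fin] at h
  rw [div_mul_eq_mul_div, div_le_iff₀ (by exact_mod_cast Nat.pow_self_pos)]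
  exact h.trans_eq (mul_comm _ _)
end

section
/- Let V be an n×n complex matrix with columns v_1,…,v_n. Suppose λ > 0 and α_1,…,α_n > 0 satisfy V·Diag(α)·V† ⪯ λI and ∏_i α_i ≥ 1, and suppose P is an n×n Hermitian positive semidefinite matrix with trace n. Then ∏_{i=1}^n v_i† P v_i ≤ λⁿ. -/
open Matrix Finset ComplexOrder

/-! Testing the Löwner inequality `V Diag(α) Vᴴ ⪯ λ I` against `P ⪰ 0` gives
`∑ αᵢ vᵢᴴ P vᵢ = Tr (P V Diag(α) Vᴴ) ≤ λ Tr P = λ n`. As `∏ αᵢ ≥ 1`, AM–GM then yields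
`∏ vᵢᴴ P vᵢ ≤ ∏ αᵢ vᵢᴴ P vᵢ ≤ (∑ αᵢ vᵢᴴ P vᵢ / n)ⁿ ≤ λⁿ`. -/

namespace Matrix

variable {ι 𝕜 : Type*} [Fintype ι] [RCLike 𝕜]

lemma PosSemidef.trace_mul_nonneg {A B : Matrix ι ι 𝕜} (hA : A.PosSemidef)
    (hB : B.PosSemidef) : 0 ≤ (A * B).trace := by
  classical
  open scoped MatrixOrder in
  obtain ⟨C, rfl⟩ : ∃ C : Matrix ι ι 𝕜, A = Cᴴ * C :=
    ⟨CFC.sqrt A, by rw [← star_eq_conjTranspose, (CFC.sqrt_nonneg A).isSelfAdjoint.star_eq,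
      CFC.sqrt_mul_sqrt_self A hA.nonneg]⟩
  rw [Matrix.mul_assoc, trace_mul_comm]
  exact (hB.mul_mul_conjTranspose_same C).trace_nonneg

lemma conjTranspose_mul_mul_self_apply (P V : Matrix ι ι 𝕜) (i : ι) :
    (Vᴴ * P * V) i i = star (fun j => V j i) ⬝ᵥ P *ᵥ (fun j => V j i) := by
  rw [Matrix.mul_assoc]; rfl

lemma trace_mul_mul_diagonal_mul_conjTranspose [DecidableEq ι] (P V : Matrix ι ι 𝕜)
    (d : ι → 𝕜) : (P * (V * diagonal d * Vᴴ)).trace = ∑ i, d i * (Vᴴ * P * V) i i := by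
  rw [← Matrix.mul_assoc, trace_mul_cycle, ← Matrix.mul_assoc]
  simp [trace, mul_diagonal, mul_comm]

lemma sum_mul_dotProduct_mulVec_le_smul_trace [DecidableEq ι] {P V : Matrix ι ι 𝕜}
    {d : ι → 𝕜} {c : ℝ} (hV : (c • (1 : Matrix ι ι 𝕜) - V * diagonal d * Vᴴ).PosSemidef)
    (hP : P.PosSemidef) :
    ∑ i, d i * (star (fun j => V j i) ⬝ᵥ P *ᵥ fun j => V j i) ≤ c • P.trace := by
  have h := hP.trace_mul_nonneg hV
  rw [mul_sub, trace_sub, Matrix.mul_smul, mul_one, trace_smul, sub_nonneg,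
    trace_mul_mul_diagonal_mul_conjTranspose] at h
  simpa only [conjTranspose_mul_mul_self_apply] using h

end Matrix

namespace Real

lemma prod_le_pow_card_of_sum_le {ι : Type*} (s : Finset ι) {z : ι → ℝ} {c : ℝ}
    (hz : ∀ i ∈ s, 0 ≤ z i) (h : ∑ i ∈ s, z i ≤ #s * c) : ∏ i ∈ s, z i ≤ c ^ #s := by
  rcases s.eq_empty_or_nonempty with rfl | hs
  · simp
  have hcard : (0 : ℝ) < #s := by exact_mod_cast hs.card_pos
  have amgm := geom_mean_le_arith_mean s (fun _ => 1) z (fun _ _ => zero_le_one)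
    (by simpa using hs.card_pos) hz
  simp only [rpow_one, one_mul, sum_const, nsmul_eq_mul, mul_one] at amgm
  have hroot : (∏ i ∈ s, z i) ^ (#s : ℝ)⁻¹ ≤ c :=
    amgm.trans ((div_le_iff₀ hcard).2 (by linarith))
  calc ∏ i ∈ s, z i = ((∏ i ∈ s, z i) ^ (#s : ℝ)⁻¹) ^ #s :=
        (rpow_inv_natCast_pow (prod_nonneg hz) hs.card_pos.ne').symm
    _ ≤ c ^ #s := pow_le_pow_left₀ (rpow_nonneg (prod_nonneg hz) _) hroot _

lemma prod_le_pow_card_of_sum_mul_le {ι : Type*} (s : Finset ι) {α r : ι → ℝ} {c : ℝ}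
    (hα : ∀ i ∈ s, 0 ≤ α i) (hr : ∀ i ∈ s, 0 ≤ r i) (hprod : 1 ≤ ∏ i ∈ s, α i)
    (h : ∑ i ∈ s, α i * r i ≤ #s * c) : ∏ i ∈ s, r i ≤ c ^ #s :=
  calc ∏ i ∈ s, r i ≤ (∏ i ∈ s, α i) * ∏ i ∈ s, r i :=
        le_mul_of_one_le_left (prod_nonneg hr) hprod
    _ = ∏ i ∈ s, α i * r i := prod_mul_distrib.symm
    _ ≤ c ^ #s := prod_le_pow_card_of_sum_le s (fun i hi => mul_nonneg (hα i hi) (hr i hi)) h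

end Real

theorem stmt4_general (n : ℕ) (V : Matrix (Fin n) (Fin n) ℂ) (lam : ℝ) (α : Fin n → ℝ)
    (hα : ∀ i, 0 < α i) (hprod : 1 ≤ ∏ i, α i)
    (hpsd : (lam • (1 : Matrix (Fin n) (Fin n) ℂ) -
        V * Matrix.diagonal (fun i => (α i : ℂ)) * Vᴴ).PosSemidef)
    (P : Matrix (Fin n) (Fin n) ℂ) (hP : P.PosSemidef) (htr : P.trace = n) :
    ∏ i, (star (fun j => V j i) ⬝ᵥ P.mulVec (fun j => V j i)) ≤ ((lam ^ n : ℝ) : ℂ) := by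
  set x : Fin n → ℂ := fun i => star (fun j => V j i) ⬝ᵥ P *ᵥ fun j => V j i
  have hx : ∀ i, 0 ≤ x i := fun i => hP.dotProduct_mulVec_nonneg _
  have hx_re : ∀ i, x i = (x i).re := fun i =>
    Complex.eq_re_of_ofReal_le (r := 0) (by simpa using hx i)
  have hsum : ∑ i, α i * (x i).re ≤ n * lam := by
    have h := sum_mul_dotProduct_mulVec_le_smul_trace hpsd hP
    rw [htr] at h
    rw [← Complex.real_le_real]
    push_cast
    simpa [← hx_re, mul_comm] using h
  have hre : ∏ i, (x i).re ≤ lam ^ n := by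
    simpa using Real.prod_le_pow_card_of_sum_mul_le univ (fun i _ => (hα i).le)
      (fun i _ => (Complex.nonneg_iff.1 (hx i)).1) hprod (by simpa using hsum)
  calc ∏ i, x i = ((∏ i, (x i).re : ℝ) : ℂ) := by
        push_cast; exact prod_congr rfl fun i _ => hx_re i
    _ ≤ ((lam ^ n : ℝ) : ℂ) := by exact_mod_cast hre

/-- Weak duality for the convex relaxation of maximizing a product of linear forms:
if `V Diag(α) Vᴴ ⪯ λ I`, `∏ αᵢ ≥ 1`, `αᵢ > 0`, and `P ⪰ 0` is Hermitian with `Tr P = n`,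
then `∏ᵢ vᵢᴴ P vᵢ ≤ λⁿ` (in the standard partial order on `ℂ`). -/
theorem stmt4 (n : ℕ) (V : Matrix (Fin n) (Fin n) ℂ) (lam : ℝ) (α : Fin n → ℝ)
    (hlam : 0 < lam) (hα : ∀ i, 0 < α i) (hprod : 1 ≤ ∏ i, α i)
    (hpsd : (lam • (1 : Matrix (Fin n) (Fin n) ℂ) -
        V * Matrix.diagonal (fun i => (α i : ℂ)) * Vᴴ).PosSemidef)
    (P : Matrix (Fin n) (Fin n) ℂ) (hP : P.PosSemidef) (htr : P.trace = n) :
    ∏ i, (star (fun j => V j i) ⬝ᵥ P.mulVec (fun j => V j i)) ≤ ((lam ^ n : ℝ) : ℂ) :=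
  stmt4_general n V lam α hα hprod hpsd P hP htr
end

section
/- For every positive integer r, 1/(2r) < γ − L_r < (r+2)/(2r(r+1)), where L_r = H_{r−1} − log r, H denotes harmonic numbers, and γ is the Euler–Mascheroni constant. -/
/-!
Write `a_n = H_n - log n - γ`. Its increments `a_n - a_{n+1} = log (1 + 1/n) - 1/(n+1)` are
squeezed by the midpoint and trapezoid estimates `2/(2n+1) < log (1 + 1/n) < (1/n + 1/(n+1))/2`
for `∫_n^{n+1} dt/t`, both read off the series `log (1 + 1/a) = 2 ∑ y^(2k+1)/(2k+1)` with
`y = 1/(2a+1)`. Hence `a_n - 1/(2n)` increases and `a_n - 1/(2(n+1))` decreases, and since both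
tend to `0` we get `1/(2(n+1)) < a_n < 1/(2n)`. The theorem is this at `n = r`, because
`γ - L_r = 1/r - a_r`.
-/

open Real Filter Topology

theorem StrictMono.lt_of_tendsto {α β : Type*} [TopologicalSpace α] [Preorder α]
    [OrderClosedTopology α] [LinearOrder β] [NoMaxOrder β] {f : β → α} {a : α}
    (hf : StrictMono f) (ha : Tendsto f atTop (𝓝 a)) (b : β) : f b < a := by
  obtain ⟨c, hbc⟩ := exists_gt b
  exact (hf hbc).trans_le (hf.monotone.ge_of_tendsto ha c)

theorem StrictAnti.lt_of_tendsto {α β : Type*} [TopologicalSpace α] [Preorder α]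
    [OrderClosedTopology α] [LinearOrder β] [NoMaxOrder β] {f : β → α} {a : α}
    (hf : StrictAnti f) (ha : Tendsto f atTop (𝓝 a)) (b : β) : a < f b :=
  StrictMono.lt_of_tendsto (α := αᵒᵈ) hf ha b

lemma tendsto_inv_two_mul_natCast_add_nhds_zero (c : ℝ) :
    Tendsto (fun k : ℕ => (2 * ((k : ℝ) + c))⁻¹) atTop (𝓝 0) :=
  tendsto_inv_atTop_zero.comp <| tendsto_natCast_atTop_atTop.atTop_add tendsto_const_nhds
    |>.const_mul_atTop two_pos

namespace Real

lemma two_div_two_mul_add_one_lt_log_one_add_inv {a : ℝ} (ha : 0 < a) :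
    2 / (2 * a + 1) < log (1 + a⁻¹) := by
  refine hasSum_lt (f := fun k : ℕ => if k = 0 then 2 / (2 * a + 1) else 0) (i := 1)
    (fun k => ?_) (by positivity) (hasSum_ite_eq 0 _) (hasSum_log_one_add_inv ha)
  rcases k with _ | k
  · norm_num [div_eq_mul_inv]
  · simp only [Nat.add_one_ne_zero, if_false]
    positivity

lemma log_one_add_inv_lt_inv_add_inv_div_two {a : ℝ} (ha : 0 < a) :
    log (1 + a⁻¹) < (a⁻¹ + (a + 1)⁻¹) / 2 := by
  have hlog := hasSum_log_one_add_inv ha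
  set y := 1 / (2 * a + 1) with hy_def
  have hy : 0 < y := by positivity
  have hy_sq : 1 - y ^ 2 = 4 * a * (a + 1) * y ^ 2 := by
    rw [hy_def]; field_simp; ring
  have hy_sq_lt : y ^ 2 < 1 := by linarith [show 0 < 1 - y ^ 2 by rw [hy_sq]; positivity]
  -- dropping the factors `1/(2k+1)` leaves the geometric series `2y/(1-y²)`
  have hgeom := (hasSum_geometric_of_lt_one (sq_nonneg y) hy_sq_lt).mul_left (2 * y)
  have hgeom_sum : 2 * y * (1 - y ^ 2)⁻¹ = (a⁻¹ + (a + 1)⁻¹) / 2 := by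
    rw [hy_sq, hy_def]; field_simp; ring
  rw [← hgeom_sum]
  refine hasSum_lt (i := 1) (fun k => ?_) ?_ hlog hgeom
  · have hk : 1 / (2 * (k : ℝ) + 1) ≤ 1 := by
      rw [div_le_one (by positivity)]; linarith [k.cast_nonneg (α := ℝ)]
    calc 2 * (1 / (2 * (k : ℝ) + 1)) * y ^ (2 * k + 1)
        ≤ 2 * 1 * y ^ (2 * k + 1) := by gcongr
      _ = 2 * y * (y ^ 2) ^ k := by rw [pow_succ, pow_mul]; ring
  · have := pow_pos hy 3
    norm_num
    linarith

lemma harmonic_sub_log_sub_harmonic_succ_sub_log {n : ℕ} (hn : n ≠ 0) :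
    (harmonic n - log n) - (harmonic (n + 1) - log ((n : ℝ) + 1)) =
      log (1 + (n : ℝ)⁻¹) - ((n : ℝ) + 1)⁻¹ := by
  have hn' : (0 : ℝ) < n := by positivity
  have hlog : log ((n : ℝ) + 1) - log n = log (1 + (n : ℝ)⁻¹) := by
    rw [← log_div (by positivity) hn'.ne', add_div, div_self hn'.ne', one_div]
  push_cast [harmonic_succ]
  linarith

lemma tendsto_harmonic_succ_sub_log_succ :
    Tendsto (fun k : ℕ => (harmonic (k + 1) : ℝ) - log ((k : ℝ) + 1)) atTop
      (𝓝 eulerMascheroniConstant) := by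
  exact_mod_cast tendsto_harmonic_sub_log.comp (tendsto_add_atTop_nat 1)

lemma harmonic_sub_log_sub_eulerMascheroniConstant_lt {n : ℕ} (hn : n ≠ 0) :
    harmonic n - log n - eulerMascheroniConstant < (2 * (n : ℝ))⁻¹ := by
  obtain ⟨k, rfl⟩ := Nat.exists_eq_add_one_of_ne_zero hn
  let u : ℕ → ℝ := fun k => harmonic (k + 1) - log ((k : ℝ) + 1) - (2 * ((k : ℝ) + 1))⁻¹
  have hu : StrictMono u := strictMono_nat_of_lt_succ fun k => by
    have hstep := harmonic_sub_log_sub_harmonic_succ_sub_log k.succ_ne_zero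
    have hlog := log_one_add_inv_lt_inv_add_inv_div_two (a := (k : ℝ) + 1) (by positivity)
    simp only [u, mul_inv]
    push_cast at *
    linarith
  have hlim : Tendsto u atTop (𝓝 eulerMascheroniConstant) := by
    simpa only [sub_zero] using
      tendsto_harmonic_succ_sub_log_succ.sub (tendsto_inv_two_mul_natCast_add_nhds_zero 1)
  have hk := hu.lt_of_tendsto hlim k
  push_cast
  linarith

lemma inv_two_mul_add_one_lt_harmonic_sub_log_sub_eulerMascheroniConstant {n : ℕ}
    (hn : n ≠ 0) : (2 * ((n : ℝ) + 1))⁻¹ < harmonic n - log n - eulerMascheroniConstant := by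
  obtain ⟨k, rfl⟩ := Nat.exists_eq_add_one_of_ne_zero hn
  let v : ℕ → ℝ := fun k => harmonic (k + 1) - log ((k : ℝ) + 1) - (2 * ((k : ℝ) + 2))⁻¹
  have hv : StrictAnti v := strictAnti_nat_of_succ_lt fun k => by
    have hstep := harmonic_sub_log_sub_harmonic_succ_sub_log k.succ_ne_zero
    have hlog := two_div_two_mul_add_one_lt_log_one_add_inv (a := (k : ℝ) + 1) (by positivity)
    have hk : (2 * ((k : ℝ) + 2))⁻¹ - (2 * ((k : ℝ) + 1 + 2))⁻¹ <
        2 / (2 * ((k : ℝ) + 1) + 1) - ((k : ℝ) + 1 + 1)⁻¹ := by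
      rw [← sub_pos]; field_simp; ring_nf; positivity
    simp only [v]
    push_cast at *
    linarith
  have hlim : Tendsto v atTop (𝓝 eulerMascheroniConstant) := by
    simpa only [sub_zero] using
      tendsto_harmonic_succ_sub_log_succ.sub (tendsto_inv_two_mul_natCast_add_nhds_zero 2)
  have hk := hv.lt_of_tendsto hlim k
  push_cast
  rw [show (k : ℝ) + 1 + 1 = k + 2 by ring]
  linarith

end Real

/-- For every positive integer `r`, with `L_r = H_{r−1} − log r`,
`1/(2r) < γ − L_r < (r+2)/(2r(r+1))`. -/
theorem stmt10 (r : ℕ) (hr : 0 < r) :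
    1 / (2 * (r : ℝ)) <
        Real.eulerMascheroniConstant - ((harmonic (r - 1) : ℝ) - Real.log r) ∧
      Real.eulerMascheroniConstant - ((harmonic (r - 1) : ℝ) - Real.log r) <
        ((r : ℝ) + 2) / (2 * (r : ℝ) * ((r : ℝ) + 1)) := by
  have hr' : (r : ℝ) ≠ 0 := by positivity
  have hH : (harmonic (r - 1) : ℝ) = harmonic r - (r : ℝ)⁻¹ := by
    rw [← Nat.sub_add_cancel hr, harmonic_succ, Nat.add_sub_cancel]
    push_cast
    ring
  have hupper := harmonic_sub_log_sub_eulerMascheroniConstant_lt hr.ne'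
  have hlower := inv_two_mul_add_one_lt_harmonic_sub_log_sub_eulerMascheroniConstant hr.ne'
  have hleft : 1 / (2 * (r : ℝ)) = (r : ℝ)⁻¹ - (2 * (r : ℝ))⁻¹ := by field_simp; ring
  have hright : ((r : ℝ) + 2) / (2 * (r : ℝ) * ((r : ℝ) + 1)) =
      (r : ℝ)⁻¹ - (2 * ((r : ℝ) + 1))⁻¹ := by
    field_simp; ring
  rw [hH, hleft, hright]
  constructor <;> linarith
end

section
/- Let A be an n×n HPSD matrix and D a diagonal matrix with positive diagonal and A ⪯ D. Then for any y ∈ ℂⁿ with ‖y‖² = n and any factorization A = V†V with columns v_i, one has (n!/nⁿ)·∏_{i=1}^n |⟨v_i, y⟩|² ≤ per(A) ≤ ∏_{i=1}^n D_{ii}. In particular, the pair (y, D) certifies a multiplicative approximation of per(A). -/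
open Matrix Finset ComplexOrder

/-!
Write `A^{⊗n}` for the `n`-fold Kronecker power of `A`, a matrix indexed by maps `n → n`, and
`χ` for the indicator of the bijections. Then `⟨χ, A^{⊗n} χ⟩ = n! per A`, so `per` is monotone
for the Löwner order on positive semidefinite matrices as soon as `A ↦ A^{⊗n}` is; the latter
follows by expanding `(A + C)^{⊗n}` into Kronecker products of copies of `A` and `C`, all positive
semidefinite.

For the upper bound apply this to `A ⪯ D`, using `per D = ∏ Dᵢᵢ`. For the lower bound,
`y yᴴ ⪯ ‖y‖² I` (Cauchy–Schwarz) gives `(Vᴴ y)(Vᴴ y)ᴴ = Vᴴ y yᴴ V ⪯ ‖y‖² A`, and the permanent of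
the rank-one matrix `w wᴴ` is `n! ∏ |wᵢ|²`.
-/

namespace Matrix

section piKronecker

variable {ι m R 𝕜 : Type*} [Fintype ι]

def piKronecker [CommMonoid R] (P : ι → Matrix m m R) : Matrix (ι → m) (ι → m) R :=
  of fun f g => ∏ i, P i (f i) (g i)

theorem piKronecker_conjTranspose_mul_self [Fintype m] [DecidableEq ι] [CommSemiring R]
    [StarRing R] (B : ι → Matrix m m R) :
    piKronecker (fun i => (B i)ᴴ * B i) = (piKronecker B)ᴴ * piKronecker B := by
  ext f g
  simp only [piKronecker, mul_apply, conjTranspose_apply, of_apply, star_prod,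
    ← prod_mul_distrib]
  exact Fintype.prod_sum fun i k => star (B i k (f i)) * B i k (g i)

theorem piKronecker_add [DecidableEq ι] [CommSemiring R] (P C : ι → Matrix m m R) :
    piKronecker (P + C) = ∑ t : Finset ι, piKronecker (t.piecewise C P) := by
  ext f g
  have entry (t : Finset ι) (i : ι) : t.piecewise C P i (f i) (g i) =
      t.piecewise (fun i => C i (f i) (g i)) (fun i => P i (f i) (g i)) i := by
    by_cases hi : i ∈ t <;> simp [hi]
  simp only [piKronecker, sum_apply, of_apply, Pi.add_apply, add_apply, add_comm (P _ _ _),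
    Fintype.prod_add, entry, prod_piecewise, univ_inter, compl_eq_univ_sdiff]

variable [Fintype m] [RCLike 𝕜]

theorem PosSemidef.piKronecker {P : ι → Matrix m m 𝕜} (hP : ∀ i, (P i).PosSemidef) :
    (Matrix.piKronecker P).PosSemidef := by
  classical
  open scoped MatrixOrder Norms.L2Operator in
  choose B hB using fun i => CStarAlgebra.nonneg_iff_eq_star_mul_self.mp (hP i).nonneg
  rw [show P = fun i => (B i)ᴴ * B i from funext hB, piKronecker_conjTranspose_mul_self]
  exact posSemidef_conjTranspose_mul_self _

theorem PosSemidef.piKronecker_sub_piKronecker {P Q : ι → Matrix m m 𝕜}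
    (hP : ∀ i, (P i).PosSemidef) (hQP : ∀ i, (Q i - P i).PosSemidef) :
    (Matrix.piKronecker Q - Matrix.piKronecker P).PosSemidef := by
  classical
  obtain ⟨C, rfl⟩ : ∃ C, Q = P + C := ⟨Q - P, by abel⟩
  rw [piKronecker_add, ← add_sum_erase _ _ (mem_univ ∅), piecewise_empty, add_sub_cancel_left]
  refine posSemidef_sum _ fun t _ => PosSemidef.piKronecker fun i => ?_
  by_cases hi : i ∈ t <;> simp_all

end piKronecker

section permanent

variable {n R 𝕜 : Type*} [Fintype n] [DecidableEq n]

theorem permanent_vecMulVec [CommSemiring R] (u v : n → R) :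
    (vecMulVec u v).permanent = (Fintype.card n).factorial * ((∏ i, u i) * ∏ i, v i) := by
  simp only [permanent, vecMulVec_apply, prod_mul_distrib, Equiv.prod_comp, sum_const, card_univ,
    Fintype.card_perm, nsmul_eq_mul]

def permIndicator [Semiring R] : (n → n) → R :=
  ∑ σ : Equiv.Perm n, Pi.single ⇑σ 1

theorem permIndicator_dotProduct_mulVec [Semiring R] (M : Matrix (n → n) (n → n) R) :
    permIndicator ⬝ᵥ (M *ᵥ permIndicator) = ∑ σ : Equiv.Perm n, ∑ τ : Equiv.Perm n, M σ τ := by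
  simp [permIndicator, sum_dotProduct, mulVec_sum, dotProduct_sum, single_dotProduct]
  exact sum_comm

theorem permIndicator_dotProduct_piKronecker_mulVec [CommSemiring R] (A : Matrix n n R) :
    permIndicator ⬝ᵥ (piKronecker (fun _ => A) *ᵥ permIndicator) =
      (Fintype.card n).factorial * A.permanent := by
  have row_perm (σ : Equiv.Perm n) : ∑ τ : Equiv.Perm n, ∏ i, A (σ i) (τ i) = A.permanent := by
    rw [← permanent_permute_cols σ A, ← permanent_transpose]; rfl
  simp only [permIndicator_dotProduct_mulVec, piKronecker, of_apply, row_perm, sum_const,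
    card_univ, Fintype.card_perm, nsmul_eq_mul]

variable [RCLike 𝕜]

theorem star_permIndicator : star (permIndicator : (n → n) → 𝕜) = permIndicator := by
  simp [permIndicator]

theorem PosSemidef.permanent_le_permanent {A B : Matrix n n 𝕜} (hA : A.PosSemidef)
    (hBA : (B - A).PosSemidef) : A.permanent ≤ B.permanent := by
  have h := (PosSemidef.piKronecker_sub_piKronecker (fun _ => hA) (fun _ => hBA))
    |>.dotProduct_mulVec_nonneg permIndicator
  rw [star_permIndicator, sub_mulVec, dotProduct_sub, permIndicator_dotProduct_piKronecker_mulVec,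
    permIndicator_dotProduct_piKronecker_mulVec, sub_nonneg] at h
  exact le_of_mul_le_mul_left h (by positivity)

theorem permanent_vecMulVec_star (w : n → 𝕜) :
    (vecMulVec w (star w)).permanent =
      (((Fintype.card n).factorial * ∏ i, ‖w i‖ ^ 2 : ℝ) : 𝕜) := by
  rw [permanent_vecMulVec]
  simp only [Pi.star_apply, RCLike.star_def, ← map_prod, RCLike.mul_conj, norm_prod, prod_pow]
  push_cast
  rfl

theorem PosSemidef.smul_one_sub_vecMulVec_star (y : n → 𝕜) :
    (((∑ i, ‖y i‖ ^ 2 : ℝ) : 𝕜) • (1 : Matrix n n 𝕜) - vecMulVec y (star y)).PosSemidef := by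
  have hc : (0 : 𝕜) ≤ ((∑ i, ‖y i‖ ^ 2 : ℝ) : 𝕜) := by positivity
  refine .of_dotProduct_mulVec_nonneg
    ((PosSemidef.one.smul hc).isHermitian.sub (posSemidef_vecMulVec_self_star y).isHermitian)
    fun x => ?_
  let X : EuclideanSpace 𝕜 n := WithLp.toLp 2 x
  let Y : EuclideanSpace 𝕜 n := WithLp.toLp 2 y
  have hxx : star x ⬝ᵥ x = (‖X‖ : 𝕜) ^ 2 := by
    rw [← inner_self_eq_norm_sq_to_K, EuclideanSpace.inner_toLp_toLp, dotProduct_comm]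
  have hyy : ∑ i, ‖y i‖ ^ 2 = ‖Y‖ ^ 2 := (EuclideanSpace.norm_sq_eq Y).symm
  have hxy : star x ⬝ᵥ y = inner 𝕜 X Y := by
    rw [EuclideanSpace.inner_toLp_toLp, dotProduct_comm]
  have hyx : star y ⬝ᵥ x = inner 𝕜 Y X := by
    rw [EuclideanSpace.inner_toLp_toLp, dotProduct_comm]
  have cauchy_schwarz : ‖inner 𝕜 X Y‖ ^ 2 ≤ ‖Y‖ ^ 2 * ‖X‖ ^ 2 := by
    rw [← mul_pow, mul_comm]
    exact pow_le_pow_left₀ (norm_nonneg _) (norm_inner_le_norm X Y) 2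
  rw [sub_mulVec, dotProduct_sub, smul_mulVec, one_mulVec, dotProduct_smul, vecMulVec_mulVec,
    dotProduct_smul, hxx, hxy, hyx, hyy, op_smul_eq_mul, ← inner_conj_symm Y X, RCLike.mul_conj,
    smul_eq_mul]
  exact_mod_cast sub_nonneg.mpr cauchy_schwarz

theorem factorial_mul_prod_norm_sq_le_permanent (V : Matrix n n 𝕜) (y : n → 𝕜) :
    (((Fintype.card n).factorial * ∏ i, ‖(Vᴴ *ᵥ y) i‖ ^ 2 : ℝ) : 𝕜) ≤
      ((∑ i, ‖y i‖ ^ 2 : ℝ) : 𝕜) ^ Fintype.card n * (Vᴴ * V).permanent := by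
  set c : 𝕜 := ((∑ i, ‖y i‖ ^ 2 : ℝ) : 𝕜)
  have hrank : Vᴴ * vecMulVec y (star y) * V = vecMulVec (Vᴴ *ᵥ y) (star (Vᴴ *ᵥ y)) := by
    rw [mul_vecMulVec, vecMulVec_mul, star_mulVec, conjTranspose_conjTranspose]
  have hsub : c • (Vᴴ * V) - Vᴴ * vecMulVec y (star y) * V =
      Vᴴ * (c • 1 - vecMulVec y (star y)) * V := by
    rw [mul_sub, sub_mul, Matrix.mul_smul, mul_one, Matrix.smul_mul]
  rw [← permanent_vecMulVec_star, ← permanent_smul, ← hrank]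
  refine ((posSemidef_vecMulVec_self_star y).conjTranspose_mul_mul_same V).permanent_le_permanent ?_
  rw [hsub]
  exact (PosSemidef.smul_one_sub_vecMulVec_star y).conjTranspose_mul_mul_same V

end permanent

end Matrix

theorem perm_eq_permanent {n : Type*} [Fintype n] [DecidableEq n] (A : Matrix n n ℂ) :
    perm A = A.permanent := by
  rw [← permanent_transpose]; rfl

theorem stmt17_general (n : ℕ) (V : Matrix (Fin n) (Fin n) ℂ) (d : Fin n → ℝ)
    (hAD : (Matrix.diagonal (fun i => (d i : ℂ)) - Vᴴ * V).PosSemidef)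
    (y : Fin n → ℂ) (hy : ∑ i, ‖y i‖ ^ 2 = (n : ℝ)) :
    (((n.factorial : ℝ) / (n : ℝ) ^ n) *
        ∏ i, ‖star (fun j => V j i) ⬝ᵥ y‖ ^ 2 : ℝ) ≤ (perm (Vᴴ * V)).re ∧
      (perm (Vᴴ * V)).re ≤ ∏ i, d i := by
  constructor
  · have hle := factorial_mul_prod_norm_sq_le_permanent V y
    rw [hy, Fintype.card_fin, ← perm_eq_permanent, ← RCLike.ofReal_pow] at hle
    have hre := (RCLike.le_iff_re_im.mp hle).1
    rw [RCLike.ofReal_re, RCLike.re_ofReal_mul] at hre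
    rw [div_mul_eq_mul_div, div_le_iff₀ (by exact_mod_cast Nat.pow_self_pos),
      mul_comm _ ((n : ℝ) ^ n)]
    exact hre
  · have hle := (posSemidef_conjTranspose_mul_self V).permanent_le_permanent hAD
    rw [permanent_diagonal, ← perm_eq_permanent, ← Complex.ofReal_prod] at hle
    exact (Complex.le_def.mp hle).1

/-- Certificate of approximation: if `A = Vᴴ V ⪯ D` with `D` diagonal with positive
diagonal entries `dᵢ`, and `y` lies on the complex sphere of radius `√n`, then
`(n!/nⁿ) ∏ᵢ |⟨vᵢ, y⟩|² ≤ per A ≤ ∏ᵢ Dᵢᵢ`. -/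
theorem stmt17 (n : ℕ) (V : Matrix (Fin n) (Fin n) ℂ) (d : Fin n → ℝ)
    (hd : ∀ i, 0 < d i)
    (hAD : (Matrix.diagonal (fun i => (d i : ℂ)) - Vᴴ * V).PosSemidef)
    (y : Fin n → ℂ) (hy : ∑ i, ‖y i‖ ^ 2 = (n : ℝ)) :
    (((n.factorial : ℝ) / (n : ℝ) ^ n) *
        ∏ i, ‖star (fun j => V j i) ⬝ᵥ y‖ ^ 2 : ℝ) ≤ (perm (Vᴴ * V)).re ∧
      (perm (Vᴴ * V)).re ≤ ∏ i, d i :=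
  stmt17_general n V d hAD y hy
end
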